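/- arXiv:2303.09445 — 6 statements merged into one kernel-verified Lean document; each statement's English description precedes it below -/
import Mathlib

section
/- Let W be an n×m real matrix whose kernel contains a strictly positive vector and such that dim(ker(W)) = 2. Then the cone ker(W) ∩ ℝ^m_{≥0} is generated by exactly two vectors d_1, d_2 (forming its minimal set of generators), and these satisfy supp(d_1) ⊊ {1,...,m}, supp(d_2) ⊊ {1,...,m}, and supp(d_1) ∪ supp(d_2) = {1,...,m}. -/
/-- If `ker(W)` contains a strictly positive vector and has dimension 2, then the
cone `ker(W) ∩ ℝ^m_{≥0}` is minimally generated by exactly two vectors, whose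
supports are proper subsets of `{1,...,m}` with union all of `{1,...,m}`. -/
theorem dim_two_kernel_two_generators (n m : ℕ) (W : Matrix (Fin n) (Fin m) ℝ)
    (hpos : ∃ x : Fin m → ℝ, (∀ i, 0 < x i) ∧ W.mulVec x = 0)
    (hdim : Module.finrank ℝ (LinearMap.ker W.mulVecLin) = 2) :
    ∃ d₁ d₂ : Fin m → ℝ,
      (W.mulVec d₁ = 0 ∧ ∀ j, 0 ≤ d₁ j) ∧
      (W.mulVec d₂ = 0 ∧ ∀ j, 0 ≤ d₂ j) ∧
      (∀ v : Fin m → ℝ, W.mulVec v = 0 → (∀ j, 0 ≤ v j) →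
        ∃ a b : ℝ, 0 ≤ a ∧ 0 ≤ b ∧ v = a • d₁ + b • d₂) ∧
      ¬ (∀ v : Fin m → ℝ, W.mulVec v = 0 → (∀ j, 0 ≤ v j) →
        ∃ a : ℝ, 0 ≤ a ∧ v = a • d₁) ∧
      ¬ (∀ v : Fin m → ℝ, W.mulVec v = 0 → (∀ j, 0 ≤ v j) →
        ∃ b : ℝ, 0 ≤ b ∧ v = b • d₂) ∧
      {j | d₁ j ≠ 0} ⊂ Set.univ ∧
      {j | d₂ j ≠ 0} ⊂ Set.univ ∧
      {j | d₁ j ≠ 0} ∪ {j | d₂ j ≠ 0} = Set.univ := by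
  obtain ⟨x, hx, hxker⟩ := hpos
  set K := LinearMap.ker W.mulVecLin with hKdef
  have hxK : x ∈ K := by simpa [hKdef, Matrix.mulVecLin_apply] using hxker
  have hm : 2 ≤ m := by
    have h1 := Submodule.finrank_le K
    rw [hdim, Module.finrank_fin_fun] at h1
    exact h1
  haveI : NeZero m := ⟨by omega⟩
  have hx0 : x ≠ 0 := by
    intro h
    have := hx 0
    rw [h] at this
    simp at this
  -- obtain y in K independent of x
  have hle : Submodule.span ℝ {x} ≤ K := Submodule.span_le.2 (by simpa using hxK)
  have hlt : Submodule.span ℝ {x} < K := by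
    rcases lt_or_eq_of_le hle with h | h
    · exact h
    · exfalso
      have h1 : Module.finrank ℝ (Submodule.span ℝ {x}) = 1 := finrank_span_singleton hx0
      rw [h, hdim] at h1
      norm_num at h1
  obtain ⟨y, hyK, hy⟩ := SetLike.exists_of_lt hlt
  have hyker : W.mulVec y = 0 := by simpa [hKdef, Matrix.mulVecLin_apply] using hyK
  have hli : LinearIndependent ℝ ![x, y] := by
    rw [LinearIndependent.pair_iff]
    intro s t hst
    rcases eq_or_ne t 0 with ht | ht
    · subst ht
      simp only [zero_smul, add_zero] at hst
      rcases smul_eq_zero.1 hst with hs | hxz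
      · exact ⟨hs, rfl⟩
      · exact absurd hxz hx0
    · exfalso
      apply hy
      refine Submodule.mem_span_singleton.2 ⟨-(s/t), ?_⟩
      funext j
      have h3 := congrFun hst j
      simp only [Pi.add_apply, Pi.smul_apply, smul_eq_mul, Pi.zero_apply] at h3
      simp only [Pi.smul_apply, smul_eq_mul]
      field_simp
      linarith
  -- span {x, y} = K
  have hspan : Submodule.span ℝ {x, y} = K := by
    apply Submodule.eq_of_le_of_finrank_le
    · exact Submodule.span_le.2 (by rintro z (rfl | rfl) <;> simpa using (by assumption))
    · have hcard : Module.finrank ℝ (Submodule.span ℝ (Set.range ![x, y])) = 2 := by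
        rw [finrank_span_eq_card hli]
        simp
      have hr : Set.range ![x, y] = {x, y} := by
        ext z
        simp [Matrix.range_cons, Matrix.range_empty]
        tauto
      rw [hr] at hcard
      rw [hdim, hcard]
  have hmem : ∀ v ∈ K, ∃ a b : ℝ, a • x + b • y = v := by
    intro v hv
    exact Submodule.mem_span_pair.1 (hspan ▸ hv)
  -- ratios
  set r : Fin m → ℝ := fun j => y j / x j with hrdef
  have hxy : ∀ j, y j = r j * x j := fun j => (div_mul_cancel₀ (y j) (hx j).ne').symm
  obtain ⟨i₀, hi₀⟩ := Finite.exists_min r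
  obtain ⟨i₁, hi₁⟩ := Finite.exists_max r
  set S := r i₀ with hSdef
  set R := r i₁ with hRdef
  have hSR : S < R := by
    by_contra h
    push_neg at h
    have hall : ∀ j, r j = S := fun j => le_antisymm ((hi₁ j).trans h) (hi₀ j)
    apply hy
    refine Submodule.mem_span_singleton.2 ⟨S, ?_⟩
    funext j
    rw [Pi.smul_apply, smul_eq_mul]
    rw [hxy j, hall j]
  have hRS0 : R - S ≠ 0 := by linarith
  refine ⟨fun j => R * x j - y j, fun j => y j - S * x j, ⟨?_, ?_⟩, ⟨?_, ?_⟩, ?_, ?_, ?_, ?_, ?_, ?_⟩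
  · -- kernel d₁
    have : (fun j => R * x j - y j) = R • x - y := by
      funext j; simp [Pi.smul_apply, smul_eq_mul]
    rw [this, Matrix.mulVec_sub, Matrix.mulVec_smul, hxker, hyker]
    simp
  · -- nonneg d₁
    intro j
    show 0 ≤ R * x j - y j
    have h1 := hi₁ j
    have h2 := hx j
    have h3 := hxy j
    nlinarith
  · -- kernel d₂
    have : (fun j => y j - S * x j) = y - S • x := by
      funext j; simp [Pi.smul_apply, smul_eq_mul]
    rw [this, Matrix.mulVec_sub, Matrix.mulVec_smul, hxker, hyker]
    simp
  · -- nonneg d₂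
    intro j
    show 0 ≤ y j - S * x j
    have h1 := hi₀ j
    have h2 := hx j
    have h3 := hxy j
    nlinarith
  · -- generation
    intro v hvker hvpos
    have hvK : v ∈ K := by simpa [hKdef, Matrix.mulVecLin_apply] using hvker
    obtain ⟨a, b, hab⟩ := hmem v hvK
    refine ⟨(a + b * S) / (R - S), (a + b * R) / (R - S), ?_, ?_, ?_⟩
    · apply div_nonneg _ (by linarith)
      have h1 := hvpos i₀
      rw [← hab] at h1
      simp only [Pi.add_apply, Pi.smul_apply, smul_eq_mul] at h1
      rw [hxy i₀] at h1
      have h2 := hx i₀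
      nlinarith
    · apply div_nonneg _ (by linarith)
      have h1 := hvpos i₁
      rw [← hab] at h1
      simp only [Pi.add_apply, Pi.smul_apply, smul_eq_mul] at h1
      rw [hxy i₁] at h1
      have h2 := hx i₁
      nlinarith
    · funext j
      rw [← hab]
      simp only [Pi.add_apply, Pi.smul_apply, smul_eq_mul]
      field_simp
      ring
  · -- d₂ not generated by d₁ alone
    intro hcon
    obtain ⟨a, _, hd⟩ := hcon (fun j => y j - S * x j)
      (by
        have : (fun j => y j - S * x j) = y - S • x := by
          funext j; simp [Pi.smul_apply, smul_eq_mul]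
        rw [this, Matrix.mulVec_sub, Matrix.mulVec_smul, hxker, hyker]; simp)
      (by
        intro j
        show 0 ≤ y j - S * x j
        have h1 := hi₀ j
        have h2 := hx j
        have h3 := hxy j
        nlinarith)
    have h4 := congrFun hd i₁
    simp only [Pi.smul_apply, smul_eq_mul] at h4
    have h5 : y i₁ = R * x i₁ := hxy i₁
    have h6 := hx i₁
    nlinarith
  · -- d₁ not generated by d₂ alone
    intro hcon
    obtain ⟨a, _, hd⟩ := hcon (fun j => R * x j - y j)
      (by
        have : (fun j => R * x j - y j) = R • x - y := by
          funext j; simp [Pi.smul_apply, smul_eq_mul]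
        rw [this, Matrix.mulVec_sub, Matrix.mulVec_smul, hxker, hyker]; simp)
      (by
        intro j
        show 0 ≤ R * x j - y j
        have h1 := hi₁ j
        have h2 := hx j
        have h3 := hxy j
        nlinarith)
    have h4 := congrFun hd i₀
    simp only [Pi.smul_apply, smul_eq_mul] at h4
    have h5 : y i₀ = S * x i₀ := hxy i₀
    have h6 := hx i₀
    nlinarith
  · rw [Set.ssubset_univ_iff]
    intro h
    have h1 : i₁ ∈ {j | R * x j - y j ≠ 0} := h ▸ Set.mem_univ i₁
    apply h1
    rw [hxy i₁]
    ring
  · rw [Set.ssubset_univ_iff]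
    intro h
    have h1 : i₀ ∈ {j | y j - S * x j ≠ 0} := h ▸ Set.mem_univ i₀
    apply h1
    rw [hxy i₀]
    ring
  · apply Set.eq_univ_of_forall
    intro j
    by_contra h
    simp only [Set.mem_union, Set.mem_setOf_eq, not_or, not_not] at h
    obtain ⟨h1, h2⟩ := h
    have h3 := hx j
    have h4 := hxy j
    nlinarith
end

section
/- Let W be an n×m real matrix, let L_1, ..., L_ℓ be a partition of {1,...,m}, and let W_i denote the submatrix of W with columns indexed by L_i. Suppose: (i) for each i ≤ ℓ-1, dim(ker(W_i)) = 1 and every nonzero element of ker(W_i) has support equal to L_i; (ii) dim(ker(W_ℓ)) = 2; (iii) dim(ker(W)) = ℓ+1 (so the kernels of the W_i are 'independent': ker(W) = ⊕_i ker(W_i) viewed via zero-extension); and (iv) ker(W) contains a strictly positive vector. Then the pointed cone ker(W) ∩ ℝ^m_{≥0} has a minimal generating set of exactly ℓ+1 vectors d_1, ..., d_{ℓ+1} such that supp(d_i) = L_i for 1 ≤ i ≤ ℓ-1, supp(d_ℓ) ⊊ L_ℓ, supp(d_{ℓ+1}) ⊊ L_ℓ, and supp(d_ℓ) ∪ supp(d_{ℓ+1})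 = L_ℓ. -/
noncomputable def kerBlock (n m : ℕ) (W : Matrix (Fin n) (Fin m) ℝ)
    (L : Set (Fin m)) : Submodule ℝ (Fin m → ℝ) :=
  LinearMap.ker W.mulVecLin ⊓
    ⨅ j ∈ Lᶜ, LinearMap.ker (LinearMap.proj (R := ℝ) (φ := fun _ : Fin m => ℝ) j)

lemma mem_kerBlock {n m : ℕ} {W : Matrix (Fin n) (Fin m) ℝ} {L : Set (Fin m)}
    {z : Fin m → ℝ} :
    z ∈ kerBlock n m W L ↔ W.mulVec z = 0 ∧ ∀ j ∉ L, z j = 0 := by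
  simp [kerBlock, Submodule.mem_inf, Submodule.mem_iInf, LinearMap.mem_ker,
    Matrix.mulVecLin_apply, LinearMap.proj_apply]

lemma kerBlock_mono {n m : ℕ} {W : Matrix (Fin n) (Fin m) ℝ} {L L' : Set (Fin m)}
    (h : L ⊆ L') : kerBlock n m W L ≤ kerBlock n m W L' := by
  intro z hz
  rw [mem_kerBlock] at hz ⊢
  exact ⟨hz.1, fun j hj => hz.2 j fun hjL => hj (h hjL)⟩

lemma kerBlock_le_ker {n m : ℕ} {W : Matrix (Fin n) (Fin m) ℝ} {L : Set (Fin m)} :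
    kerBlock n m W L ≤ LinearMap.ker W.mulVecLin := inf_le_left

lemma kerBlock_disjoint {n m : ℕ} {W : Matrix (Fin n) (Fin m) ℝ} {L L' : Set (Fin m)}
    (h : Disjoint L L') : kerBlock n m W L ⊓ kerBlock n m W L' = ⊥ := by
  rw [eq_bot_iff]
  intro z hz
  rw [Submodule.mem_inf] at hz
  obtain ⟨hz1, hz2⟩ := hz
  rw [mem_kerBlock] at hz1 hz2
  have : z = 0 := by
    funext j
    by_cases hj : j ∈ L
    · exact hz2.2 j (fun hj' => (Set.disjoint_left.mp h hj) hj')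
    · exact hz1.2 j hj
  simp [this]

lemma finrank_biSup_kerBlock {n m k : ℕ} {W : Matrix (Fin n) (Fin m) ℝ}
    {L : Fin k → Set (Fin m)}
    (hdisj : ∀ i j : Fin k, i ≠ j → Disjoint (L i) (L j))
    (F : Finset (Fin k)) :
    Module.finrank ℝ (⨆ i ∈ F, kerBlock n m W (L i) : Submodule ℝ (Fin m → ℝ)) =
      ∑ i ∈ F, Module.finrank ℝ (kerBlock n m W (L i)) := by
  classical
  induction F using Finset.induction_on with
  | empty => simp [finrank_bot]
  | @insert a F ha ih =>
    rw [Finset.iSup_insert, Finset.sum_insert ha, ← ih]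
    have hinf : kerBlock n m W (L a) ⊓ (⨆ i ∈ F, kerBlock n m W (L i)) = ⊥ := by
      have hle : (⨆ i ∈ F, kerBlock n m W (L i)) ≤ kerBlock n m W (⋃ i ∈ F, L i) := by
        refine iSup₂_le fun i hi => kerBlock_mono ?_
        exact Set.subset_biUnion_of_mem hi
      have hdisj' : Disjoint (L a) (⋃ i ∈ F, L i) := by
        refine Set.disjoint_iUnion₂_right.mpr fun i hi => hdisj a i ?_
        rintro rfl; exact ha hi
      have := kerBlock_disjoint (W := W) hdisj'
      rw [eq_bot_iff] at this ⊢
      exact le_trans (inf_le_inf_left _ hle) this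
    have h2 := Submodule.finrank_sup_add_finrank_inf_eq (kerBlock n m W (L a))
      (⨆ i ∈ F, kerBlock n m W (L i))
    rw [hinf, finrank_bot] at h2
    omega

lemma indicator_mem_kerBlock {n m k : ℕ} {W : Matrix (Fin n) (Fin m) ℝ}
    {L : Fin k → Set (Fin m)}
    (hdisj : ∀ i j : Fin k, i ≠ j → Disjoint (L i) (L j))
    (hrk : Module.finrank ℝ (LinearMap.ker W.mulVecLin) ≤
      ∑ i, Module.finrank ℝ (kerBlock n m W (L i)))
    {v : Fin m → ℝ} (hv : W.mulVec v = 0) (i : Fin k) :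
    (L i).indicator v ∈ kerBlock n m W (L i) := by
  classical
  have hS : (⨆ i, kerBlock n m W (L i)) = LinearMap.ker W.mulVecLin := by
    apply Submodule.eq_of_le_of_finrank_le (iSup_le fun i => kerBlock_le_ker)
    calc Module.finrank ℝ (LinearMap.ker W.mulVecLin)
        ≤ ∑ i, Module.finrank ℝ (kerBlock n m W (L i)) := hrk
      _ = Module.finrank ℝ (⨆ i ∈ Finset.univ, kerBlock n m W (L i) :
            Submodule ℝ (Fin m → ℝ)) := (finrank_biSup_kerBlock hdisj _).symm
      _ = _ := by
            rw [show (⨆ i ∈ Finset.univ, kerBlock n m W (L i)) =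
              ⨆ i, kerBlock n m W (L i) by simp]
  have hvS : v ∈ ⨆ i, kerBlock n m W (L i) := by
    rw [hS, LinearMap.mem_ker, Matrix.mulVecLin_apply]; exact hv
  rw [Submodule.mem_iSup_iff_exists_finsupp] at hvS
  obtain ⟨f, hf, hsum⟩ := hvS
  have hsum' : ∑ j, f j = v := by
    rw [← hsum, Finsupp.sum_fintype]; intro; rfl
  have : (L i).indicator v = f i := by
    funext j
    by_cases hj : j ∈ L i
    · rw [Set.indicator_of_mem hj, ← hsum']
      have : ∀ k' ∈ Finset.univ, k' ≠ i → f k' j = 0 := by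
        intro k' _ hk'
        exact (mem_kerBlock.mp (hf k')).2 j
          (fun hjk => Set.disjoint_left.mp (hdisj k' i hk') hjk hj)
      simp only [Finset.sum_apply]
      rw [Finset.sum_eq_single i this (by simp)]
    · rw [Set.indicator_of_notMem hj]
      exact ((mem_kerBlock.mp (hf i)).2 j hj).symm
  rw [this]; exact hf i

lemma sum_indicator_eq {m k : ℕ} {L : Fin k → Set (Fin m)}
    (hdisj : ∀ i j : Fin k, i ≠ j → Disjoint (L i) (L j))
    (hcover : (⋃ i, L i) = Set.univ) (v : Fin m → ℝ) :
    v = ∑ i, (L i).indicator v := by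
  classical
  funext j
  have : j ∈ ⋃ i, L i := hcover ▸ Set.mem_univ j
  obtain ⟨i, hi⟩ := Set.mem_iUnion.mp this
  rw [Finset.sum_apply]
  rw [Finset.sum_eq_single i
    (fun k' _ hk' => Set.indicator_of_notMem
      (fun hjk => Set.disjoint_left.mp (hdisj k' i hk') hjk hi) v) (by simp)]
  exact (Set.indicator_of_mem hi v).symm

/-- Type I structure: with `ℓ = l+1` linkage classes, the first `l` blocks having
kernel dimension 1 (with full block support) and the last block kernel dimension 2,
total kernel dimension `ℓ+1`, and a strictly positive kernel vector, the cone
`ker(W) ∩ ℝ^m_{≥0}` has a minimal generating set of `ℓ+1` vectors with the stated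
supports. -/
theorem typeI_generators (n m l : ℕ) (W : Matrix (Fin n) (Fin m) ℝ)
    (L : Fin (l + 1) → Set (Fin m))
    (hdisj : ∀ i j : Fin (l + 1), i ≠ j → Disjoint (L i) (L j))
    (hcover : (⋃ i, L i) = Set.univ)
    (hblock1 : ∀ i : Fin (l + 1), i ≠ Fin.last l →
      Module.finrank ℝ (kerBlock n m W (L i)) = 1 ∧
      ∀ z : Fin m → ℝ, z ∈ kerBlock n m W (L i) → z ≠ 0 → {j | z j ≠ 0} = L i)
    (hblock2 : Module.finrank ℝ (kerBlock n m W (L (Fin.last l))) = 2)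
    (hdim : Module.finrank ℝ (LinearMap.ker W.mulVecLin) = l + 2)
    (hpos : ∃ x : Fin m → ℝ, (∀ i, 0 < x i) ∧ W.mulVec x = 0) :
    ∃ d : Fin (l + 2) → Fin m → ℝ,
      (∀ i, W.mulVec (d i) = 0 ∧ ∀ j, 0 ≤ d i j) ∧
      (∀ v : Fin m → ℝ, W.mulVec v = 0 → (∀ j, 0 ≤ v j) →
        ∃ c : Fin (l + 2) → ℝ, (∀ i, 0 ≤ c i) ∧ v = ∑ i, c i • d i) ∧
      (∀ i₀ : Fin (l + 2),
        ¬ (∀ v : Fin m → ℝ, W.mulVec v = 0 → (∀ j, 0 ≤ v j) →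
          ∃ c : Fin (l + 2) → ℝ, (∀ i, 0 ≤ c i) ∧ c i₀ = 0 ∧
            v = ∑ i, c i • d i)) ∧
      (∀ i : Fin (l + 1), i ≠ Fin.last l →
        {j | d (Fin.castSucc i) j ≠ 0} = L i) ∧
      {j | d (Fin.castSucc (Fin.last l)) j ≠ 0} ⊂ L (Fin.last l) ∧
      {j | d (Fin.last (l + 1)) j ≠ 0} ⊂ L (Fin.last l) ∧
      {j | d (Fin.castSucc (Fin.last l)) j ≠ 0} ∪
        {j | d (Fin.last (l + 1)) j ≠ 0} = L (Fin.last l) := by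
  classical
  obtain ⟨x, hx, hxker⟩ := hpos
  -- rank bookkeeping
  have hsumrk : ∑ i, Module.finrank ℝ (kerBlock n m W (L i)) = l + 2 := by
    rw [Fin.sum_univ_castSucc,
      Finset.sum_congr rfl (fun i _ => (hblock1 _ (Fin.castSucc_lt_last i).ne).1)]
    simp [hblock2]
  have hrk : Module.finrank ℝ (LinearMap.ker W.mulVecLin) ≤
      ∑ i, Module.finrank ℝ (kerBlock n m W (L i)) := by rw [hdim, hsumrk]
  -- components of the positive vector
  set e : Fin (l + 1) → Fin m → ℝ := fun i => (L i).indicator x with he_def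
  have he : ∀ i, e i ∈ kerBlock n m W (L i) :=
    fun i => indicator_mem_kerBlock hdisj hrk hxker i
  have he_pos : ∀ i, ∀ j ∈ L i, 0 < e i j := by
    intro i j hj; rw [he_def]; simpa [Set.indicator_of_mem hj] using hx j
  have he_zero : ∀ i, ∀ j ∉ L i, e i j = 0 := by
    intro i j hj; rw [he_def]; simp [Set.indicator_of_notMem hj]
  -- each L i is nonempty
  have hLne : ∀ i, (L i).Nonempty := by
    intro i
    have hpos : 0 < Module.finrank ℝ (kerBlock n m W (L i)) := by
      by_cases hi : i = Fin.last l
      · rw [hi, hblock2]; norm_num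
      · rw [(hblock1 i hi).1]; norm_num
    obtain ⟨⟨z, hzmem⟩, hzne⟩ := Module.finrank_pos_iff_exists_ne_zero.mp hpos
    have hz0 : z ≠ 0 := fun h => hzne (by simpa [Submodule.mk_eq_zero] using h)
    obtain ⟨j, hj⟩ := Function.ne_iff.mp hz0
    exact ⟨j, by_contra fun hjL => hj (by simpa using (mem_kerBlock.mp hzmem).2 j hjL)⟩
  have he_ne : ∀ i, e i ≠ 0 := by
    intro i h
    obtain ⟨j, hj⟩ := hLne i
    have := he_pos i j hj
    rw [h] at this; simp at this
  -- rank-1 blocks are spanned by e i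
  have hspan1 : ∀ i, i ≠ Fin.last l → kerBlock n m W (L i) = Submodule.span ℝ {e i} := by
    intro i hi
    refine (Submodule.eq_of_le_of_finrank_le
      ((Submodule.span_singleton_le_iff_mem _ _).mpr (he i)) ?_).symm
    rw [(hblock1 i hi).1, finrank_span_singleton (he_ne i)]
  -- the last block
  set LL : Set (Fin m) := L (Fin.last l) with hLL_def
  set V : Submodule ℝ (Fin m → ℝ) := kerBlock n m W LL with hV_def
  set p : Fin m → ℝ := e (Fin.last l) with hp_def
  have hpV : p ∈ V := he _
  have hp_pos : ∀ j ∈ LL, 0 < p j := he_pos _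
  have hVsupp : ∀ z ∈ V, ∀ j ∉ LL, z j = 0 := fun z hz => (mem_kerBlock.mp hz).2
  have hVker : ∀ z ∈ V, W.mulVec z = 0 := fun z hz => (mem_kerBlock.mp hz).1
  have hlt : Submodule.span ℝ {p} < V := by
    refine lt_of_le_of_ne ((Submodule.span_singleton_le_iff_mem _ _).mpr hpV) ?_
    intro h
    have h2 := hblock2
    rw [← h, finrank_span_singleton (he_ne _)] at h2
    omega
  obtain ⟨q, hqV, hq⟩ := SetLike.exists_of_lt hlt
  have hp_ne : p ≠ 0 := he_ne _
  have hli : LinearIndependent ℝ ![p, q] := by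
    rw [LinearIndependent.pair_iff]
    intro s t hst
    have ht : t = 0 := by
      by_contra ht
      apply hq
      rw [Submodule.mem_span_singleton]
      refine ⟨-s / t, ?_⟩
      have h2 : (-s) • p = t • q := by
        have h3 := hst
        rw [add_eq_zero_iff_eq_neg] at h3
        rw [neg_smul, h3, neg_neg]
      rw [div_eq_inv_mul, ← smul_smul, h2, inv_smul_smul₀ ht]
    refine ⟨?_, ht⟩
    rw [ht, zero_smul, add_zero] at hst
    exact (smul_eq_zero.mp hst).resolve_right hp_ne
  have hVspan : V = Submodule.span ℝ {p, q} := by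
    refine (Submodule.eq_of_le_of_finrank_le ?_ ?_).symm
    · rw [Submodule.span_le]
      rintro z (rfl | rfl)
      · exact hpV
      · exact hqV
    · have hr : Set.range ![p, q] = {p, q} := by
        ext z; simp [Fin.exists_fin_two, or_comm]
      have := finrank_span_eq_card hli
      rw [hr] at this
      rw [hV_def] at hblock2 ⊢
      rw [hblock2, this]
      simp
  -- ratios on the last block
  set r : Fin m → ℝ := fun j => q j / p j with hr_def
  have hpq : ∀ j ∈ LL, q j = r j * p j := by
    intro j hj
    rw [hr_def]
    field_simp [(hp_pos j hj).ne']
  have hLLfin : LL.Finite := Set.toFinite _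
  set F : Finset (Fin m) := hLLfin.toFinset with hF_def
  have hFmem : ∀ j, j ∈ F ↔ j ∈ LL := fun j => Set.Finite.mem_toFinset _
  have hFne : F.Nonempty := by
    obtain ⟨j, hj⟩ := hLne (Fin.last l)
    exact ⟨j, (hFmem j).mpr hj⟩
  set rmin : ℝ := F.inf' hFne r with hrmin_def
  set rmax : ℝ := F.sup' hFne r with hrmax_def
  have hrmin_le : ∀ j ∈ LL, rmin ≤ r j := fun j hj => Finset.inf'_le _ ((hFmem j).mpr hj)
  have hle_rmax : ∀ j ∈ LL, r j ≤ rmax := fun j hj => Finset.le_sup' _ ((hFmem j).mpr hj)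
  obtain ⟨j0, hj0F, hj0⟩ := Finset.exists_mem_eq_inf' hFne r
  obtain ⟨j1, hj1F, hj1⟩ := Finset.exists_mem_eq_sup' hFne r
  have hj0L : j0 ∈ LL := (hFmem j0).mp hj0F
  have hj1L : j1 ∈ LL := (hFmem j1).mp hj1F
  have hminmax : rmin < rmax := by
    rcases lt_or_ge rmin rmax with h | h
    · exact h
    · exfalso
      apply hq
      have hall : ∀ j ∈ LL, r j = rmin := fun j hj =>
        le_antisymm (le_trans (hle_rmax j hj) h) (hrmin_le j hj)
      rw [Submodule.mem_span_singleton]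
      refine ⟨rmin, ?_⟩
      funext j
      by_cases hj : j ∈ LL
      · rw [Pi.smul_apply, smul_eq_mul, hpq j hj, hall j hj]
      · rw [Pi.smul_apply, smul_eq_mul, hVsupp q hqV j hj, hVsupp p hpV j hj, mul_zero]
  -- the two generators of the last block
  set d1 : Fin m → ℝ := (-rmin) • p + q with hd1_def
  set d2 : Fin m → ℝ := rmax • p - q with hd2_def
  have hd1V : d1 ∈ V := V.add_mem (V.smul_mem _ hpV) hqV
  have hd2V : d2 ∈ V := V.sub_mem (V.smul_mem _ hpV) hqV
  have hd1c : ∀ j ∈ LL, d1 j = p j * (r j - rmin) := by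
    intro j hj
    rw [hd1_def]
    simp only [Pi.add_apply, Pi.smul_apply, smul_eq_mul]
    rw [hpq j hj]; ring
  have hd2c : ∀ j ∈ LL, d2 j = p j * (rmax - r j) := by
    intro j hj
    rw [hd2_def]
    simp only [Pi.sub_apply, Pi.smul_apply, smul_eq_mul]
    rw [hpq j hj]; ring
  have hd1nn : ∀ j, 0 ≤ d1 j := by
    intro j
    by_cases hj : j ∈ LL
    · rw [hd1c j hj]
      exact mul_nonneg (hp_pos j hj).le (sub_nonneg.mpr (hrmin_le j hj))
    · rw [hVsupp d1 hd1V j hj]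
  have hd2nn : ∀ j, 0 ≤ d2 j := by
    intro j
    by_cases hj : j ∈ LL
    · rw [hd2c j hj]
      exact mul_nonneg (hp_pos j hj).le (sub_nonneg.mpr (hle_rmax j hj))
    · rw [hVsupp d2 hd2V j hj]
  have hd1supp : {j | d1 j ≠ 0} = {j ∈ LL | r j ≠ rmin} := by
    ext j
    simp only [Set.mem_setOf_eq, Set.mem_sep_iff]
    constructor
    · intro h
      have hj : j ∈ LL := by
        by_contra hj
        exact h (hVsupp d1 hd1V j hj)
      refine ⟨hj, fun hr' => h ?_⟩
      rw [hd1c j hj, hr']; ring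
    · rintro ⟨hj, hr'⟩
      rw [hd1c j hj]
      exact (mul_pos (hp_pos j hj)
        (sub_pos.mpr (lt_of_le_of_ne (hrmin_le j hj) (Ne.symm hr')))).ne'
  have hd2supp : {j | d2 j ≠ 0} = {j ∈ LL | r j ≠ rmax} := by
    ext j
    simp only [Set.mem_setOf_eq, Set.mem_sep_iff]
    constructor
    · intro h
      have hj : j ∈ LL := by
        by_contra hj
        exact h (hVsupp d2 hd2V j hj)
      refine ⟨hj, fun hr' => h ?_⟩
      rw [hd2c j hj, hr']; ring
    · rintro ⟨hj, hr'⟩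
      rw [hd2c j hj]
      exact (mul_pos (hp_pos j hj) (sub_pos.mpr (lt_of_le_of_ne (hle_rmax j hj) hr'))).ne'
  -- decomposition of nonnegative elements of the last block
  have hblockgen : ∀ u, u ∈ V → (∀ j, 0 ≤ u j) →
      ∃ s t : ℝ, 0 ≤ s ∧ 0 ≤ t ∧ u = s • d1 + t • d2 := by
    intro u huV hunn
    have : u ∈ Submodule.span ℝ {p, q} := hVspan ▸ huV
    obtain ⟨a, b, hab⟩ := Submodule.mem_span_pair.mp this
    have hu_eq : ∀ j ∈ LL, u j = p j * (a + b * r j) := by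
      intro j hj
      rw [← hab]
      simp only [Pi.add_apply, Pi.smul_apply, smul_eq_mul]
      rw [hpq j hj]; ring
    have hrj1 : r j1 = rmax := by rw [hrmax_def]; exact hj1.symm
    have hrj0 : r j0 = rmin := by rw [hrmin_def]; exact hj0.symm
    have hmax_nn : 0 ≤ a + b * rmax := by
      have h4 := hunn j1
      rw [hu_eq j1 hj1L, hrj1] at h4
      nlinarith [hp_pos j1 hj1L]
    have hmin_nn : 0 ≤ a + b * rmin := by
      have h4 := hunn j0
      rw [hu_eq j0 hj0L, hrj0] at h4
      nlinarith [hp_pos j0 hj0L]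
    have hD : (0:ℝ) < rmax - rmin := sub_pos.mpr hminmax
    refine ⟨(a + b * rmax) / (rmax - rmin), (a + b * rmin) / (rmax - rmin),
      div_nonneg hmax_nn hD.le, div_nonneg hmin_nn hD.le, ?_⟩
    funext j
    by_cases hj : j ∈ LL
    · simp only [Pi.add_apply, Pi.smul_apply, smul_eq_mul]
      rw [hu_eq j hj, hd1c j hj, hd2c j hj]
      field_simp
      ring
    · simp only [Pi.add_apply, Pi.smul_apply, smul_eq_mul]
      rw [hVsupp u huV j hj, hVsupp d1 hd1V j hj, hVsupp d2 hd2V j hj]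
      ring
  have hrj1 : r j1 = rmax := by rw [hrmax_def]; exact hj1.symm
  have hrj0 : r j0 = rmin := by rw [hrmin_def]; exact hj0.symm
  -- the generators
  set d : Fin (l + 2) → Fin m → ℝ :=
    Fin.snoc (fun i : Fin (l + 1) => if i = Fin.last l then d1 else e i) d2 with hd_def
  have hd_cast : ∀ i : Fin (l + 1),
      d (Fin.castSucc i) = if i = Fin.last l then d1 else e i := by
    intro i; rw [hd_def]; simp [Fin.snoc_castSucc]
  have hd_last : d (Fin.last (l + 1)) = d2 := by rw [hd_def]; simp [Fin.snoc_last]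
  have he_nn : ∀ i j, 0 ≤ e i j := by
    intro i j
    by_cases hj : j ∈ L i
    · exact (he_pos i j hj).le
    · rw [he_zero i j hj]
  refine ⟨d, ?_, ?_, ?_, ?_, ?_, ?_, ?_⟩
  · -- each generator is a nonnegative kernel vector
    intro i
    induction i using Fin.lastCases with
    | last => rw [hd_last]; exact ⟨hVker d2 hd2V, hd2nn⟩
    | cast i =>
      rw [hd_cast]
      by_cases hi : i = Fin.last l
      · rw [if_pos hi]; exact ⟨hVker d1 hd1V, hd1nn⟩
      · rw [if_neg hi]
        exact ⟨(mem_kerBlock.mp (he i)).1, he_nn i⟩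
  · -- generation
    intro v hv hvnn
    have hvc : ∀ i, (L i).indicator v ∈ kerBlock n m W (L i) :=
      fun i => indicator_mem_kerBlock hdisj hrk hv i
    have hvnn' : ∀ (i : Fin (l + 1)) (j : Fin m), 0 ≤ (L i).indicator v j := by
      intro i j
      by_cases hj : j ∈ L i
      · rw [Set.indicator_of_mem hj]; exact hvnn j
      · rw [Set.indicator_of_notMem hj]
    have hcoef : ∀ i : Fin (l + 1), i ≠ Fin.last l →
        ∃ cc : ℝ, 0 ≤ cc ∧ (L i).indicator v = cc • e i := by
      intro i hi
      have hmem := hvc i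
      rw [hspan1 i hi, Submodule.mem_span_singleton] at hmem
      obtain ⟨cc, hcc⟩ := hmem
      obtain ⟨j, hj⟩ := hLne i
      refine ⟨cc, ?_, hcc.symm⟩
      have h1 : (L i).indicator v j = cc * e i j := by rw [← hcc]; simp
      have h2 := hvnn' i j
      rw [h1] at h2
      nlinarith [he_pos i j hj]
    obtain ⟨s, t, hs, ht, hstd⟩ := hblockgen ((L (Fin.last l)).indicator v)
      (hvc (Fin.last l)) (hvnn' (Fin.last l))
    set c0 : Fin (l + 1) → ℝ :=
      fun i => if hi : i = Fin.last l then s else (hcoef i hi).choose with hc0_def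
    have hc0_spec : ∀ i (hi : i ≠ Fin.last l),
        0 ≤ c0 i ∧ (L i).indicator v = c0 i • e i := by
      intro i hi
      rw [hc0_def]
      simp only [dif_neg hi]
      exact ⟨(hcoef i hi).choose_spec.1, (hcoef i hi).choose_spec.2⟩
    have hc0_last : c0 (Fin.last l) = s := by rw [hc0_def]; simp
    refine ⟨Fin.snoc c0 t, ?_, ?_⟩
    · intro i
      induction i using Fin.lastCases with
      | last => rw [Fin.snoc_last]; exact ht
      | cast i =>
        rw [Fin.snoc_castSucc]
        by_cases hi : i = Fin.last l
        · rw [hi, hc0_last]; exact hs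
        · exact (hc0_spec i hi).1
    · have hR : ∑ i : Fin (l + 2), (Fin.snoc c0 t : Fin (l + 2) → ℝ) i • d i
          = (∑ i : Fin l, c0 (Fin.castSucc i) • e (Fin.castSucc i)) + (s • d1 + t • d2) := by
        rw [Fin.sum_univ_castSucc]
        simp only [Fin.snoc_castSucc, Fin.snoc_last, hd_last]
        rw [Fin.sum_univ_castSucc]
        have h1 : ∀ i : Fin l, c0 (Fin.castSucc i) • d (Fin.castSucc (Fin.castSucc i))
            = c0 (Fin.castSucc i) • e (Fin.castSucc i) := by
          intro i
          rw [hd_cast, if_neg (Fin.castSucc_lt_last i).ne]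
        rw [Finset.sum_congr rfl (fun i _ => h1 i), hd_cast, if_pos rfl, hc0_last,
          add_assoc]
      rw [hR]
      calc v = ∑ i : Fin (l + 1), (L i).indicator v := sum_indicator_eq hdisj hcover v
        _ = (∑ i : Fin l, (L (Fin.castSucc i)).indicator v)
              + (L (Fin.last l)).indicator v := Fin.sum_univ_castSucc _
        _ = _ := by
              rw [hstd, Finset.sum_congr rfl
                (fun i _ => (hc0_spec _ (Fin.castSucc_lt_last i).ne).2)]
  · -- minimality
    intro i₀ hmin
    have hsum_apply : ∀ (c : Fin (l + 2) → ℝ) (j : Fin m),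
        (∑ i, c i • d i) j = ∑ i, c i * d i j := by
      intro c j
      rw [Finset.sum_apply]
      exact Finset.sum_congr rfl fun i _ => rfl
    induction i₀ using Fin.lastCases with
    | last =>
      obtain ⟨c, hcnn, hc0, hceq⟩ := hmin d2 (hVker d2 hd2V) hd2nn
      have hzero : ∀ i ∈ Finset.univ, c i * d i j0 = 0 := by
        intro i _
        induction i using Fin.lastCases with
        | last => rw [hc0, zero_mul]
        | cast i =>
          rw [hd_cast]
          by_cases hi : i = Fin.last l
          · rw [if_pos hi]
            rw [hd1c j0 hj0L, hrj0, sub_self, mul_zero, mul_zero]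
          · rw [if_neg hi]
            rw [he_zero i j0 (fun hj => Set.disjoint_left.mp
              (hdisj i (Fin.last l) hi) hj hj0L), mul_zero]
      have h1 : d2 j0 = 0 := by
        rw [hceq, hsum_apply, Finset.sum_eq_zero hzero]
      rw [hd2c j0 hj0L, hrj0] at h1
      nlinarith [hp_pos j0 hj0L, hminmax]
    | cast i' =>
      by_cases hi' : i' = Fin.last l
      · subst hi'
        obtain ⟨c, hcnn, hc0, hceq⟩ := hmin d1 (hVker d1 hd1V) hd1nn
        have hzero : ∀ i ∈ Finset.univ, c i * d i j1 = 0 := by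
          intro i _
          induction i using Fin.lastCases with
          | last =>
            rw [hd_last, hd2c j1 hj1L, hrj1, sub_self, mul_zero, mul_zero]
          | cast i =>
            by_cases hi : i = Fin.last l
            · rw [hi, hc0, zero_mul]
            · rw [hd_cast, if_neg hi]
              rw [he_zero i j1 (fun hj => Set.disjoint_left.mp
                (hdisj i (Fin.last l) hi) hj hj1L), mul_zero]
        have h1 : d1 j1 = 0 := by
          rw [hceq, hsum_apply, Finset.sum_eq_zero hzero]
        rw [hd1c j1 hj1L, hrj1] at h1
        nlinarith [hp_pos j1 hj1L, hminmax]
      · obtain ⟨c, hcnn, hc0, hceq⟩ := hmin (e i') (mem_kerBlock.mp (he i')).1 (he_nn i')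
        obtain ⟨j, hj⟩ := hLne i'
        have hjnLL : j ∉ LL := fun hjL =>
          Set.disjoint_left.mp (hdisj i' (Fin.last l) hi') hj hjL
        have hzero : ∀ i ∈ Finset.univ, c i * d i j = 0 := by
          intro i _
          induction i using Fin.lastCases with
          | last => rw [hd_last, hVsupp d2 hd2V j hjnLL, mul_zero]
          | cast i =>
            by_cases hii : i = i'
            · rw [hii, hc0, zero_mul]
            · rw [hd_cast]
              by_cases hi : i = Fin.last l
              · rw [if_pos hi, hVsupp d1 hd1V j hjnLL, mul_zero]
              · rw [if_neg hi, he_zero i j (fun hjL => Set.disjoint_left.mp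
                  (hdisj i i' hii) hjL hj), mul_zero]
        have h1 : e i' j = 0 := by
          rw [hceq, hsum_apply, Finset.sum_eq_zero hzero]
        exact absurd h1 (he_pos i' j hj).ne'
  · -- supports of the rank-1 generators
    intro i hi
    rw [hd_cast, if_neg hi]
    ext j
    simp only [Set.mem_setOf_eq]
    constructor
    · intro h
      by_contra hj
      exact h (he_zero i j hj)
    · intro hj
      exact (he_pos i j hj).ne'
  · -- support of d1 is strictly inside LL
    rw [hd_cast, if_pos rfl, hd1supp]
    refine ⟨fun j hj => hj.1, fun hsub => ?_⟩
    exact (hsub hj0L).2 hrj0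
  · -- support of d2 is strictly inside LL
    rw [hd_last, hd2supp]
    refine ⟨fun j hj => hj.1, fun hsub => ?_⟩
    exact (hsub hj1L).2 hrj1
  · -- the two supports cover LL
    rw [hd_cast, if_pos rfl, hd_last, hd1supp, hd2supp]
    ext j
    simp only [Set.mem_union, Set.mem_setOf_eq]
    constructor
    · rintro (h | h) <;> exact h.1
    · intro hj
      by_cases hr' : r j = rmin
      · exact Or.inr ⟨hj, fun h => absurd (hr' ▸ h) hminmax.ne⟩
      · exact Or.inl ⟨hj, hr'⟩
end

section
/- Let d_1, ..., d_ℓ ∈ ℝ^m_{≥0} be vectors with pairwise disjoint nonempty supports L_1, ..., L_ℓ, and let d̃ ∈ ℝ^m be linearly independent from {d_1, ..., d_ℓ} with supp(d̃) ⊆ L_1 ∪ ⋯ ∪ L_ℓ. Define α_i = max_{k ∈ L_i} (−d̃_k / (d_i)_k) for each i, and set d = Σ_i α_i d_i + d̃. Then d is a nonzero nonnegative vector, and for each i, supp(d) ∩ L_i is a proper subset of L_i. -/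
/-- Given nonnegative vectors `d i` with pairwise disjoint nonempty supports `L i`
and a vector `d̃` linearly independent from them and supported in `⋃ L i`, the
vector `d = Σ α_i d_i + d̃` with `α_i = max_{k ∈ L_i} (−d̃_k / (d_i)_k)` is a
nonzero nonnegative vector whose support meets each `L i` in a proper subset. -/
theorem shift_to_nonneg_cross_vector (m l : ℕ)
    (L : Fin l → Finset (Fin m)) (hne : ∀ i, (L i).Nonempty)
    (hdisj : ∀ i j : Fin l, i ≠ j → Disjoint (L i) (L j))
    (d : Fin l → Fin m → ℝ) (hnn : ∀ i j, 0 ≤ d i j)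
    (hsupp : ∀ (i : Fin l) (j : Fin m), d i j ≠ 0 ↔ j ∈ L i)
    (dt : Fin m → ℝ)
    (hli : LinearIndependent ℝ (Fin.snoc d dt))
    (hsub : ∀ j : Fin m, dt j ≠ 0 → ∃ i, j ∈ L i)
    (α : Fin l → ℝ)
    (hα : ∀ i, α i = (L i).sup' (hne i) (fun k => -dt k / d i k)) :
    (∑ i, α i • d i) + dt ≠ 0 ∧
    (∀ j, 0 ≤ ((∑ i, α i • d i) + dt) j) ∧
    ∀ i : Fin l,
      {j | j ∈ L i ∧ ((∑ i, α i • d i) + dt) j ≠ 0} ⊂ (L i : Set (Fin m)) := by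
  have hzero : ∀ i j, j ∉ L i → d i j = 0 := by
    intro i j h; by_contra hc; exact h ((hsupp i j).mp hc)
  have hpos : ∀ i j, j ∈ L i → 0 < d i j := fun i j h =>
    lt_of_le_of_ne (hnn i j) (Ne.symm ((hsupp i j).mpr h))
  have hDval : ∀ i j, j ∈ L i → ((∑ i, α i • d i) + dt) j = α i * d i j + dt j := by
    intro i j hj
    simp only [Pi.add_apply, Finset.sum_apply, Pi.smul_apply, smul_eq_mul]
    congr 1
    rw [Finset.sum_eq_single i]
    · intro b _ hb
      rw [hzero b j (fun h => Finset.disjoint_left.mp (hdisj b i hb) h hj), mul_zero]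
    · intro h; exact absurd (Finset.mem_univ i) h
  have hαge : ∀ i j, j ∈ L i → -dt j / d i j ≤ α i := by
    intro i j hj; rw [hα i]; exact Finset.le_sup' (fun k => -dt k / d i k) hj
  have hnonneg : ∀ j, 0 ≤ ((∑ i, α i • d i) + dt) j := by
    intro j
    by_cases h : ∃ i, j ∈ L i
    · obtain ⟨i, hj⟩ := h
      rw [hDval i j hj]
      have h1 : -dt j / d i j * d i j ≤ α i * d i j :=
        mul_le_mul_of_nonneg_right (hαge i j hj) (hnn i j)
      rw [div_mul_cancel₀ _ (hpos i j hj).ne'] at h1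
      linarith
    · push_neg at h
      have hdt : dt j = 0 := by
        by_contra hc
        obtain ⟨i, hi⟩ := hsub j hc
        exact h i hi
      simp only [Pi.add_apply, Finset.sum_apply, Pi.smul_apply, smul_eq_mul, hdt, add_zero]
      apply le_of_eq; symm
      exact Finset.sum_eq_zero (fun i _ => by rw [hzero i j (h i), mul_zero])
  refine ⟨?_, hnonneg, ?_⟩
  · intro hDz
    have := Fintype.linearIndependent_iff.mp hli (Fin.snoc α 1) ?_ (Fin.last l)
    · simp at this
    · rw [Fin.sum_univ_castSucc]
      simp only [Fin.snoc_castSucc, Fin.snoc_last, one_smul]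
      exact hDz
  · intro i
    refine HasSubset.Subset.ssubset_of_ne (fun j hj => hj.1) ?_
    obtain ⟨k, hk, hkeq⟩ := Finset.exists_mem_eq_sup' (hne i) (fun k => -dt k / d i k)
    have hDk : ((∑ i, α i • d i) + dt) k = 0 := by
      rw [hDval i k hk, hα i, hkeq, div_mul_cancel₀ _ (hpos i k hk).ne']
      ring
    intro heq
    have hmem : k ∈ {j | j ∈ L i ∧ ((∑ i, α i • d i) + dt) j ≠ 0} := by
      rw [heq]; exact Finset.mem_coe.mpr hk
    exact hmem.2 hDk
end

section
/- Let d_1, ..., d_ℓ ∈ ℝ^m_{≥0} have pairwise disjoint supports L_1, ..., L_ℓ, and let d' ∈ ℝ^m_{≥0} be nonzero with supp(d') ⊆ L_1 ∪ ⋯ ∪ L_ℓ and supp(d') ∩ L_i ⊊ L_i for all i, with d' linearly independent from {d_1,...,d_ℓ}. Define β_i = max_{k ∈ L_i} (d'_k / (d_i)_k) and d'' = Σ_i β_i d_i − d'. Then d'' is a nonzero nonnegative vector satisfying supp(d'') ∩ L_i ⊊ L_i for all i. -/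
/-- Given nonnegative vectors `d i` with pairwise disjoint supports `L i` and a
nonzero nonnegative vector `d'` supported in `⋃ L i`, meeting each `L i` in a
proper subset and linearly independent from the `d i`, the vector
`d'' = Σ β_i d_i − d'` with `β_i = max_{k ∈ L_i} (d'_k / (d_i)_k)` is a nonzero
nonnegative vector whose support meets each `L i` in a proper subset. -/
theorem reflect_cross_vector (m l : ℕ)
    (L : Fin l → Finset (Fin m)) (hne : ∀ i, (L i).Nonempty)
    (hdisj : ∀ i j : Fin l, i ≠ j → Disjoint (L i) (L j))
    (d : Fin l → Fin m → ℝ) (hnn : ∀ i j, 0 ≤ d i j)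
    (hsupp : ∀ (i : Fin l) (j : Fin m), d i j ≠ 0 ↔ j ∈ L i)
    (d' : Fin m → ℝ) (hd'nn : ∀ j, 0 ≤ d' j) (hd'ne : d' ≠ 0)
    (hsub : ∀ j : Fin m, d' j ≠ 0 → ∃ i, j ∈ L i)
    (hprop : ∀ i : Fin l, {j | j ∈ L i ∧ d' j ≠ 0} ⊂ (L i : Set (Fin m)))
    (hli : LinearIndependent ℝ (Fin.snoc d d'))
    (β : Fin l → ℝ)
    (hβ : ∀ i, β i = (L i).sup' (hne i) (fun k => d' k / d i k)) :
    (∑ i, β i • d i) - d' ≠ 0 ∧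
    (∀ j, 0 ≤ ((∑ i, β i • d i) - d') j) ∧
    ∀ i : Fin l,
      {j | j ∈ L i ∧ ((∑ i, β i • d i) - d') j ≠ 0} ⊂ (L i : Set (Fin m)) := by
  -- pointwise value
  have hval : ∀ j, ((∑ i, β i • d i) - d') j = (∑ i, β i * d i j) - d' j := by
    intro j
    simp [Finset.sum_apply, Pi.smul_apply, Pi.sub_apply, smul_eq_mul]
  have hsum : ∀ (i0 : Fin l) (j : Fin m), j ∈ L i0 →
      (∑ i, β i * d i j) = β i0 * d i0 j := by
    intro i0 j hj
    apply Finset.sum_eq_single i0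
    · intro i _ hi
      have : d i j = 0 := by
        by_contra h
        exact (Finset.disjoint_left.mp (hdisj i i0 hi)) ((hsupp i j).mp h) hj
      simp [this]
    · simp
  constructor
  · -- nonzero via linear independence
    intro h0
    have hd'eq : d' = ∑ i, β i • d i := by
      have := sub_eq_zero.mp h0
      exact this.symm
    -- build coefficients on Fin (l+1)
    have hz : ∑ k : Fin (l + 1), (Fin.snoc β (-1) : Fin (l+1) → ℝ) k • Fin.snoc d d' k = (0 : Fin m → ℝ) := by
      rw [Fin.sum_univ_castSucc]
      simp only [Fin.snoc_castSucc, Fin.snoc_last]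
      rw [hd'eq]
      simp
    have := Fintype.linearIndependent_iff.mp hli
        (Fin.snoc β (-1) : Fin (l+1) → ℝ) hz (Fin.last l)
    simp at this
  constructor
  · intro j
    rw [hval]
    by_cases hj : ∃ i0, j ∈ L i0
    · obtain ⟨i0, hj0⟩ := hj
      rw [hsum i0 j hj0]
      have hd0 : 0 < d i0 j := lt_of_le_of_ne (hnn i0 j) (Ne.symm ((hsupp i0 j).mpr hj0))
      have hβle : d' j / d i0 j ≤ β i0 := by
        rw [hβ]
        exact Finset.le_sup' (fun k => d' k / d i0 k) hj0
      have := (div_le_iff₀ hd0).mp hβle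
      linarith
    · have hd'0 : d' j = 0 := by
        by_contra h
        exact hj (hsub j h)
      have : ∀ i, d i j = 0 := by
        intro i
        by_contra h
        exact hj ⟨i, (hsupp i j).mp h⟩
      simp [hd'0, this]
  · intro i
    rw [Set.ssubset_iff_of_subset (by intro j hj; exact hj.1)]
    obtain ⟨k, hk, hksup⟩ := Finset.exists_mem_eq_sup' (hne i) (fun k => d' k / d i k)
    refine ⟨k, hk, ?_⟩
    intro hmem
    apply hmem.2
    rw [hval, hsum i k hk, hβ, hksup,
      div_mul_cancel₀ _ ((hsupp i k).mpr hk), sub_self]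
end

section
/- Suppose a pointed polyhedral cone C ⊆ ℝ^m_{≥0} is generated by vectors d_1, ..., d_{ℓ+1}, where d_1, ..., d_ℓ have pairwise disjoint supports L_1, ..., L_ℓ and supp(d_{ℓ+1}) ∩ L_i ⊊ L_i for each i (with supp(d_{ℓ+1}) meeting at least two distinct L_i's nontrivially), and d_1,...,d_{ℓ+1} are linearly independent. Then each d_j (1 ≤ j ≤ ℓ+1) spans an extreme ray of C: if d_j = λγ + (1−λ)θ with γ, θ ∈ C and 0 < λ < 1, then γ and θ are nonnegative scalar multiples of d_j. -/
/-- If a pointed cone `C ⊆ ℝ^m_{≥0}` is generated by linearly independent vectors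
`d_1,...,d_ℓ` with pairwise disjoint supports `L_i` together with a vector
`d_{ℓ+1}` whose support meets each `L_i` properly and meets at least two of the
`L_i`, then each generator spans an extreme ray of `C`. -/
theorem generators_are_extreme_rays (m l : ℕ)
    (L : Fin l → Set (Fin m))
    (d : Fin (l + 1) → Fin m → ℝ)
    (hnn : ∀ i j, 0 ≤ d i j)
    (hsupp : ∀ i : Fin l, {j | d (Fin.castSucc i) j ≠ 0} = L i)
    (hdisj : ∀ i j : Fin l, i ≠ j → Disjoint (L i) (L j))
    (hlast : ∀ i : Fin l, {j | j ∈ L i ∧ d (Fin.last l) j ≠ 0} ⊂ L i)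
    (htwo : ∃ i i' : Fin l, i ≠ i' ∧
      (∃ j ∈ L i, d (Fin.last l) j ≠ 0) ∧ (∃ j ∈ L i', d (Fin.last l) j ≠ 0))
    (hli : LinearIndependent ℝ d)
    (C : Set (Fin m → ℝ))
    (hC : C = {v | ∃ c : Fin (l + 1) → ℝ, (∀ i, 0 ≤ c i) ∧
      v = ∑ i, c i • d i}) :
    ∀ i₀ : Fin (l + 1), ∀ γ ∈ C, ∀ θ ∈ C, ∀ lam : ℝ, 0 < lam → lam < 1 →
      d i₀ = lam • γ + (1 - lam) • θ →
      (∃ a : ℝ, 0 ≤ a ∧ γ = a • d i₀) ∧ (∃ b : ℝ, 0 ≤ b ∧ θ = b • d i₀) := by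
  subst hC
  rintro i₀ γ ⟨c, hc, rfl⟩ θ ⟨c', hc', rfl⟩ lam hlam0 hlam1 heq
  -- coefficients of the combination
  set g : Fin (l + 1) → ℝ :=
    fun i => lam * c i + (1 - lam) * c' i - (if i = i₀ then 1 else 0) with hg
  have hsum : ∑ i, g i • d i = 0 := by
    have : (∑ i, (if i = i₀ then (1:ℝ) else 0) • d i) = d i₀ := by
      simp [ite_smul]
    calc ∑ i, g i • d i
        = (lam • ∑ i, c i • d i + (1 - lam) • ∑ i, c' i • d i)
          - ∑ i, (if i = i₀ then (1:ℝ) else 0) • d i := by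
          rw [Finset.smul_sum, Finset.smul_sum, ← Finset.sum_add_distrib,
            ← Finset.sum_sub_distrib]
          refine Finset.sum_congr rfl fun i _ => ?_
          simp [hg, sub_smul, add_smul, mul_smul]
      _ = 0 := by rw [this, ← heq]; abel
  have hz : ∀ i, g i = 0 := by
    have := Fintype.linearIndependent_iff.mp hli g hsum
    exact this
  have hkey : ∀ i, lam * c i + (1 - lam) * c' i = (if i = i₀ then 1 else 0) := by
    intro i
    have := hz i
    simp [hg] at this
    linarith [this]
  have hzero : ∀ i, i ≠ i₀ → c i = 0 ∧ c' i = 0 := by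
    intro i hi
    have h := hkey i
    rw [if_neg hi] at h
    have h1 : 0 ≤ lam * c i := mul_nonneg hlam0.le (hc i)
    have h2 : 0 ≤ (1 - lam) * c' i := mul_nonneg (by linarith) (hc' i)
    have hc0 : lam * c i = 0 := by linarith
    have hc'0 : (1 - lam) * c' i = 0 := by linarith
    constructor
    · rcases mul_eq_zero.mp hc0 with h | h
      · exact absurd h hlam0.ne'
      · exact h
    · rcases mul_eq_zero.mp hc'0 with h | h
      · exact absurd h (by linarith)
      · exact h
  constructor
  · refine ⟨c i₀, hc i₀, ?_⟩
    rw [Finset.sum_eq_single i₀]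
    · intro i _ hi
      rw [(hzero i hi).1, zero_smul]
    · simp
  · refine ⟨c' i₀, hc' i₀, ?_⟩
    rw [Finset.sum_eq_single i₀]
    · intro i _ hi
      rw [(hzero i hi).2, zero_smul]
    · simp
end

section
/- Let W be an n×m matrix of the form W = Y A, where Y is an n×m matrix and A is an m×m matrix whose columns sum to zero (each column sum is 0), whose off-diagonal entries are nonnegative, and which admits a strictly positive vector in its kernel. Then ker(W) ∩ ℝ^m_{≥0} contains a strictly positive vector, and consequently the image of W equals span{k_{ij}(y_j − y_i)} summed appropriately; in particular Im(W) = span{y_j − y_i : A_{ji} > 0, i ≠ j}. -/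
open Finset

/-- Any linear functional on `Fin m → ℝ` is given by dot product with its
values on the standard basis. -/
lemma dual_apply_eq_sum (m : ℕ) (φ : Module.Dual ℝ (Fin m → ℝ)) (w : Fin m → ℝ) :
    φ w = ∑ k, w k * φ (Pi.single k 1 : _) := by
  have hw : w = ∑ k, w k • (Pi.single k 1 : Fin m → ℝ) := by
    funext r
    simp [Finset.sum_apply, Pi.single_apply]
  conv_lhs => rw [hw]
  simp [map_sum, smul_eq_mul]

/-- The sum-of-squares / maximum-principle argument. -/
lemma key_quadratic (m : ℕ) (A : Matrix (Fin m) (Fin m) ℝ)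
    (hcol : ∀ i : Fin m, ∑ j, A j i = 0)
    (hoff : ∀ i j : Fin m, i ≠ j → 0 ≤ A i j)
    (x : Fin m → ℝ) (hx : ∀ i, 0 < x i) (hAx : A.mulVec x = 0)
    (v : Fin m → ℝ) (hv : ∀ i, ∑ k, v k * A k i = 0)
    {i j : Fin m} (hij : 0 < A j i) : v j = v i := by
  set B : Matrix (Fin m) (Fin m) ℝ := fun p q => A p q * x q with hB
  have colB : ∀ i, ∑ k, B k i = 0 := by
    intro i
    simp only [hB, ← Finset.sum_mul, hcol i, zero_mul]
  have rowB : ∀ k, ∑ i, B k i = 0 := by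
    intro k
    have := congrFun hAx k
    simpa [Matrix.mulVec, dotProduct, hB] using this
  have hvB : ∀ i, ∑ k, v k * B k i = 0 := by
    intro i
    have : ∑ k, v k * B k i = (∑ k, v k * A k i) * x i := by
      rw [Finset.sum_mul]; exact Finset.sum_congr rfl fun k _ => by ring
    rw [this, hv i, zero_mul]
  -- each inner sum equals ∑ k, B k i * v k ^ 2
  have inner_eq : ∀ i, ∑ k, B k i * (v k - v i) ^ 2 = ∑ k, B k i * v k ^ 2 := by
    intro i
    have h1 : ∑ k, B k i * (v k - v i) ^ 2
        = ∑ k, (B k i * v k ^ 2 - 2 * v i * (v k * B k i) + v i ^ 2 * B k i) :=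
      Finset.sum_congr rfl fun k _ => by ring
    rw [h1, Finset.sum_add_distrib, Finset.sum_sub_distrib, ← Finset.mul_sum,
      ← Finset.mul_sum, hvB i, colB i]
    ring
  have Qzero : ∑ i, ∑ k, B k i * (v k - v i) ^ 2 = 0 := by
    have : ∑ i, ∑ k, B k i * (v k - v i) ^ 2 = ∑ i, ∑ k, B k i * v k ^ 2 :=
      Finset.sum_congr rfl fun i _ => inner_eq i
    rw [this, Finset.sum_comm]
    refine Finset.sum_eq_zero fun k _ => ?_
    rw [← Finset.sum_mul, rowB k, zero_mul]
  have nonneg : ∀ i ∈ Finset.univ (α := Fin m), ∀ k ∈ Finset.univ (α := Fin m),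
      0 ≤ B k i * (v k - v i) ^ 2 := by
    intro i _ k _
    rcases eq_or_ne k i with h | h
    · subst h; simp
    · exact mul_nonneg (mul_nonneg (hoff k i h) (hx i).le) (sq_nonneg _)
  have inner_nonneg : ∀ i ∈ Finset.univ (α := Fin m),
      0 ≤ ∑ k, B k i * (v k - v i) ^ 2 := fun i hi =>
    Finset.sum_nonneg fun k hk => nonneg i hi k hk
  have inner_zero : ∀ i ∈ Finset.univ (α := Fin m),
      ∑ k, B k i * (v k - v i) ^ 2 = 0 :=
    (Finset.sum_eq_zero_iff_of_nonneg inner_nonneg).mp Qzero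
  have term_zero : B j i * (v j - v i) ^ 2 = 0 :=
    (Finset.sum_eq_zero_iff_of_nonneg (nonneg i (Finset.mem_univ i))).mp
      (inner_zero i (Finset.mem_univ i)) j (Finset.mem_univ j)
  have hBji : 0 < B j i := mul_pos hij (hx i)
  rcases mul_eq_zero.mp term_zero with h1 | h2
  · exact absurd h1 hBji.ne'
  · have := pow_eq_zero_iff (n := 2) (by norm_num) |>.mp h2
    linarith [sub_eq_zero.mp this]

lemma range_eq_span_edges (m : ℕ) (A : Matrix (Fin m) (Fin m) ℝ)
    (hcol : ∀ i : Fin m, ∑ j, A j i = 0)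
    (hoff : ∀ i j : Fin m, i ≠ j → 0 ≤ A i j)
    (hker : ∃ x : Fin m → ℝ, (∀ i, 0 < x i) ∧ A.mulVec x = 0) :
    LinearMap.range A.mulVecLin =
      Submodule.span ℝ {u : Fin m → ℝ | ∃ i j : Fin m, i ≠ j ∧ 0 < A j i ∧
        u = (Pi.single j 1 : Fin m → ℝ) - Pi.single i 1} := by
  obtain ⟨x, hx, hAx⟩ := hker
  apply Subspace.dualAnnihilator_inj.mp
  ext φ
  simp only [Submodule.mem_dualAnnihilator]
  set v : Fin m → ℝ := fun k => φ (Pi.single k 1 : Fin m → ℝ) with hvdef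
  have hcolφ : ∀ i : Fin m, φ (A.mulVec (Pi.single i 1)) = ∑ k, A k i * v k := by
    intro i
    rw [Matrix.mulVec_single, dual_apply_eq_sum]
    exact Finset.sum_congr rfl fun k _ => by simp [hvdef]
  constructor
  · -- range annihilator → span annihilator
    intro h w hw
    have hv : ∀ i, ∑ k, v k * A k i = 0 := by
      intro i
      have h0 : φ (A.mulVec (Pi.single i 1)) = 0 :=
        h _ ⟨Pi.single i 1, rfl⟩
      rw [hcolφ i] at h0
      rw [← h0]
      exact Finset.sum_congr rfl fun k _ => mul_comm _ _
    have hgen : {u : Fin m → ℝ | ∃ i j : Fin m, i ≠ j ∧ 0 < A j i ∧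
        u = (Pi.single j 1 : Fin m → ℝ) - Pi.single i 1} ⊆ ↑(LinearMap.ker φ) := by
      rintro u ⟨i, j, hij, hpos, rfl⟩
      have := key_quadratic m A hcol hoff x hx hAx v hv hpos
      simp only [SetLike.mem_coe, LinearMap.mem_ker, map_sub]
      have : v j - v i = 0 := by rw [this]; ring
      simpa [hvdef] using this
    have : Submodule.span ℝ _ ≤ LinearMap.ker φ := Submodule.span_le.mpr hgen
    exact LinearMap.mem_ker.mp (this hw)
  · -- span annihilator → range annihilator
    intro h w hw
    obtain ⟨y, rfl⟩ := hw
    have hveq : ∀ i j : Fin m, i ≠ j → 0 < A j i → v j = v i := by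
      intro i j hij hpos
      have hu : ((Pi.single j 1 : Fin m → ℝ) - Pi.single i 1) ∈
          Submodule.span ℝ {u : Fin m → ℝ | ∃ i j : Fin m, i ≠ j ∧ 0 < A j i ∧
            u = (Pi.single j 1 : Fin m → ℝ) - Pi.single i 1} :=
        Submodule.subset_span ⟨i, j, hij, hpos, rfl⟩
      have := h _ hu
      rw [map_sub] at this
      have : v j - v i = 0 := this
      linarith
    have hcolzero : ∀ i : Fin m, ∑ k, A k i * v k = 0 := by
      intro i
      have step : ∀ k : Fin m, A k i * v k = A k i * (v k - v i) + A k i * v i :=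
        fun k => by ring
      calc ∑ k, A k i * v k = ∑ k, (A k i * (v k - v i) + A k i * v i) :=
            Finset.sum_congr rfl fun k _ => step k
        _ = (∑ k, A k i * (v k - v i)) + (∑ k, A k i) * v i := by
            rw [Finset.sum_add_distrib, Finset.sum_mul]
        _ = 0 := by
            rw [hcol i, zero_mul, add_zero]
            refine Finset.sum_eq_zero fun k _ => ?_
            rcases eq_or_ne k i with hk | hk
            · subst hk; simp
            · rcases (hoff k i hk).lt_or_eq with hpos | hzero
              · rw [hveq i k (Ne.symm hk) hpos]; ring
              · rw [← hzero]; ring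
    have hψ : φ (A.mulVec y) = ∑ i, y i * φ (A.mulVec (Pi.single i 1)) := by
      have := dual_apply_eq_sum m (φ.comp A.mulVecLin) y
      simpa using this
    show φ (A.mulVec y) = 0
    rw [hψ]
    refine Finset.sum_eq_zero fun i _ => ?_
    rw [hcolφ i, hcolzero i, mul_zero]

/-- If `W = Y * A` where the columns of `A` sum to zero, off-diagonal entries of
`A` are nonnegative, and `A` has a strictly positive kernel vector, then
`ker(W) ∩ ℝ^m_{≥0}` contains a strictly positive vector, and the image of `W` is
the span of the reaction vectors `y_j − y_i` over the edges (`A_{ji} > 0`). -/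
theorem image_eq_stoichiometric_subspace (n m : ℕ)
    (Y : Matrix (Fin n) (Fin m) ℝ) (A : Matrix (Fin m) (Fin m) ℝ)
    (W : Matrix (Fin n) (Fin m) ℝ) (hW : W = Y * A)
    (hcol : ∀ i : Fin m, ∑ j, A j i = 0)
    (hoff : ∀ i j : Fin m, i ≠ j → 0 ≤ A i j)
    (hker : ∃ x : Fin m → ℝ, (∀ i, 0 < x i) ∧ A.mulVec x = 0) :
    (∃ v : Fin m → ℝ, (∀ i, 0 < v i) ∧ W.mulVec v = 0) ∧
    LinearMap.range W.mulVecLin =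
      Submodule.span ℝ {u : Fin n → ℝ | ∃ i j : Fin m, i ≠ j ∧ 0 < A j i ∧
        u = fun r => Y r j - Y r i} := by
  obtain ⟨x, hx, hAx⟩ := hker
  constructor
  · exact ⟨x, hx, by rw [hW, ← Matrix.mulVec_mulVec, hAx, Matrix.mulVec_zero]⟩
  · rw [hW, Matrix.mulVecLin_mul, LinearMap.range_comp,
      range_eq_span_edges m A hcol hoff ⟨x, hx, hAx⟩, Submodule.map_span]
    congr 1
    ext u
    constructor
    · rintro ⟨w, ⟨i, j, hij, hpos, rfl⟩, rfl⟩
      refine ⟨i, j, hij, hpos, ?_⟩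
      show Y.mulVec _ = _
      funext r
      rw [Matrix.mulVec_sub]
      simp [Matrix.mulVec_single]
    · rintro ⟨i, j, hij, hpos, rfl⟩
      refine ⟨(Pi.single j 1 : Fin m → ℝ) - Pi.single i 1, ⟨i, j, hij, hpos, rfl⟩, ?_⟩
      show Y.mulVec _ = _
      funext r
      rw [Matrix.mulVec_sub]
      simp [Matrix.mulVec_single]
end
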